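/- arXiv:1708.05539 — 6 statements merged into one kernel-verified Lean document; each statement's English description precedes it below -/
import Mathlib

section
/- Let A be an n×n symmetric positive definite tridiagonal matrix with diagonal entries a_1,...,a_n and off-diagonal entries -b_2,...,-b_n (i.e., A_{i,i+1} = A_{i+1,i} = -b_{i+1}). If b_l > 0 for all l = 2,...,n, then every entry of A^{-1} is strictly positive. -/
/-!
Fix a column `x` of `A⁻¹`, so `A x = e_j ≥ 0`. Since the off-diagonal entries of `A` are
nonpositive, replacing `x` by `|x|` can only lower the quadratic form, and together with
`A x ≥ 0` this makes `(|x| - x)ᵀ A (|x| - x) ≤ 0`; positive definiteness forces `x = |x| ≥ 0`.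
Strict positivity then spreads along the nonzero off-diagonal entries: if `x_q = 0` and
`A_{qp} < 0` with `x_p > 0`, then `(A x)_q < 0`. The off-diagonal of a tridiagonal matrix
connects all indices as a path.
-/

namespace Matrix

variable {ι : Type*} [Fintype ι] {A : Matrix ι ι ℝ} {x : ι → ℝ}

theorem abs_dotProduct_mulVec_abs_le (hoff : ∀ i j, i ≠ j → A i j ≤ 0) :
    |x| ⬝ᵥ A *ᵥ |x| ≤ x ⬝ᵥ A *ᵥ x := by
  simp only [dotProduct, mulVec, Pi.abs_apply, Finset.mul_sum]
  refine Finset.sum_le_sum fun p _ => Finset.sum_le_sum fun q _ => ?_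
  by_cases hpq : p = q
  · subst hpq
    have hsq : |x p| * |x p| = x p * x p := abs_mul_abs_self (x p)
    linear_combination A p p * hsq
  · have hprod : x p * x q ≤ |x p| * |x q| := (le_abs_self _).trans (abs_mul _ _).le
    nlinarith [hoff p q hpq]

theorem PosDef.nonneg_of_mulVec_nonneg (hA : A.PosDef) (hoff : ∀ i j, i ≠ j → A i j ≤ 0)
    (hAx : 0 ≤ A *ᵥ x) : 0 ≤ x := by
  have hsymm : Aᵀ = A := isHermitian_iff_isSymm.mp hA.isHermitian
  have hswap : x ⬝ᵥ A *ᵥ |x| = |x| ⬝ᵥ A *ᵥ x := by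
    rw [dotProduct_mulVec, ← vecMul_transpose, hsymm, dotProduct_comm]
  have hcross : x ⬝ᵥ A *ᵥ x ≤ |x| ⬝ᵥ A *ᵥ x := by
    rw [← sub_nonneg, ← sub_dotProduct]
    exact dotProduct_nonneg_of_nonneg (sub_nonneg.mpr fun i => le_abs_self (x i)) hAx
  have hform : (|x| - x) ⬝ᵥ A *ᵥ (|x| - x) ≤ 0 := by
    rw [mulVec_sub, dotProduct_sub, sub_dotProduct, sub_dotProduct, hswap]
    linarith [abs_dotProduct_mulVec_abs_le (x := x) hoff]
  have habs : |x| = x := by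
    by_contra hne
    have hpos := hA.dotProduct_mulVec_pos (sub_ne_zero.mpr hne)
    rw [star_trivial] at hpos
    linarith
  exact habs ▸ abs_nonneg x

theorem pos_of_mulVec_nonneg_of_neg {p q : ι} (hoff : ∀ i j, i ≠ j → A i j ≤ 0) (hx : 0 ≤ x)
    (hAx : 0 ≤ (A *ᵥ x) q) (hqp : A q p < 0) (hp : 0 < x p) : 0 < x q := by
  refine (hx q).lt_of_ne fun hq => hAx.not_gt ?_
  have hterm : ∀ k, A q k * x k ≤ 0 := by
    intro k
    by_cases hk : k = q
    · rw [hk, ← hq, Pi.zero_apply, mul_zero]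
    · exact mul_nonpos_of_nonpos_of_nonneg (hoff q k (Ne.symm hk)) (hx k)
  calc (A *ᵥ x) q = ∑ k, A q k * x k := rfl
    _ < ∑ _k : ι, (0 : ℝ) :=
      Finset.sum_lt_sum (fun k _ => hterm k) ⟨p, Finset.mem_univ p, mul_neg_of_neg_of_pos hqp hp⟩
    _ = 0 := Finset.sum_const_zero

theorem pos_of_mulVec_nonneg_of_reachable {G : SimpleGraph ι} {i j : ι}
    (hoff : ∀ i j, i ≠ j → A i j ≤ 0) (hG : ∀ p q, G.Adj p q → A p q < 0)
    (hx : 0 ≤ x) (hAx : 0 ≤ A *ᵥ x) (hj : 0 < x j) (hji : G.Reachable j i) : 0 < x i := by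
  rw [SimpleGraph.reachable_iff_reflTransGen] at hji
  induction hji with
  | refl => exact hj
  | tail _ hadj ih => exact pos_of_mulVec_nonneg_of_neg hoff hx (hAx _) (hG _ _ hadj.symm) ih

theorem PosDef.inv_pos_of_preconnected [DecidableEq ι] {G : SimpleGraph ι} (hA : A.PosDef)
    (hoff : ∀ i j, i ≠ j → A i j ≤ 0) (hG : ∀ p q, G.Adj p q → A p q < 0)
    (hconn : G.Preconnected) (i j : ι) : 0 < A⁻¹ i j := by
  set x := A⁻¹ *ᵥ Pi.single j 1 with hxdef
  have hx_apply : ∀ k, x k = A⁻¹ k j := fun k => by rw [hxdef, mulVec_single_one]; rfl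
  have hAx : A *ᵥ x = Pi.single j 1 := by
    rw [hxdef, mulVec_mulVec, mul_nonsing_inv A ((isUnit_iff_isUnit_det A).mp hA.isUnit),
      one_mulVec]
  have hAx_nonneg : 0 ≤ A *ᵥ x := hAx ▸ Pi.single_nonneg.mpr zero_le_one
  have hxj : 0 < x j := by
    have hne : (Pi.single j 1 : ι → ℝ) ≠ 0 := Pi.single_ne_zero_iff.mpr one_ne_zero
    simpa [hxdef, star_trivial, dotProduct_single] using hA.inv.dotProduct_mulVec_pos hne
  have hx_nonneg := hA.nonneg_of_mulVec_nonneg hoff hAx_nonneg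
  rw [← hx_apply]
  exact pos_of_mulVec_nonneg_of_reachable hoff hG hx_nonneg hAx_nonneg hxj (hconn j i)

end Matrix

/-- For a symmetric positive definite tridiagonal matrix with strictly negative
off-diagonal entries (`A_{i,i+1} = -b_{i+1}` with `b_{i+1} > 0`), every entry of
`A⁻¹` is strictly positive. -/
theorem stmt5 (n : ℕ) (A : Matrix (Fin n) (Fin n) ℝ) (hPD : A.PosDef)
    (htri : ∀ i j : Fin n, 1 < |((i : ℕ) : ℤ) - ((j : ℕ) : ℤ)| → A i j = 0)
    (hoff : ∀ i j : Fin n, |((i : ℕ) : ℤ) - ((j : ℕ) : ℤ)| = 1 → A i j < 0) :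
    ∀ i j : Fin n, 0 < A⁻¹ i j := by
  have hnonpos : ∀ i j : Fin n, i ≠ j → A i j ≤ 0 := by
    intro i j hij
    have hdist : 1 ≤ |((i : ℕ) : ℤ) - ((j : ℕ) : ℤ)| :=
      Int.one_le_abs (sub_ne_zero.mpr (by exact_mod_cast Fin.val_ne_of_ne hij))
    rcases hdist.lt_or_eq with h | h
    · exact (htri i j h).le
    · exact (hoff i j h.symm).le
  have hpath : ∀ p q, (SimpleGraph.pathGraph n).Adj p q → A p q < 0 := by
    intro p q hpq
    apply hoff
    rw [abs_eq zero_le_one]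
    rcases SimpleGraph.pathGraph_adj.mp hpq with h | h <;> omega
  exact hPD.inv_pos_of_preconnected hnonpos hpath (SimpleGraph.pathGraph_preconnected n)
end

section
/- Let A be an n×n symmetric positive definite tridiagonal matrix with off-diagonal entries -b_2,...,-b_n where b_l < 0 for all l. Then (A^{-1})_{ij} < 0 when |i-j| is odd and (A^{-1})_{ij} > 0 when |i-j| is even. -/
/-!
Conjugating `A` by the signature matrix `S = diag((-1)^i)` flips the signs of the off-diagonal
entries, so `S A S` is a positive definite Z-matrix with strictly negative sub- and superdiagonal,
and `(S A S)⁻¹ = S A⁻¹ S`. Such a matrix `M` has an entrywise positive inverse. If `M x ≥ 0`,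
pairing with the negative part `x⁻` of `x` gives `x⁻ᵀ M x⁻ ≤ x⁻ᵀ M x⁺ ≤ 0`, so `x⁻ = 0`; hence
`M⁻¹ ≥ 0`. For the column `x = M⁻¹ eⱼ`, a zero `x k = 0` forces `k ≠ j` and `x = 0` at both
neighbours of `k`; walking towards `j` would give `x j = 0`, which is impossible.
-/

open Matrix

section ZMatrix

variable {ι : Type*} [Fintype ι] [DecidableEq ι] {M : Matrix ι ι ℝ}

theorem Matrix.PosDef.nonneg_of_mulVec_nonneg_s6 (hM : M.PosDef) (hZ : ∀ k l, k ≠ l → M k l ≤ 0)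
    {x : ι → ℝ} (hx : 0 ≤ M *ᵥ x) : 0 ≤ x := by
  set p : ι → ℝ := fun k => max (x k) 0
  set q : ι → ℝ := fun k => max (-x k) 0
  have hp : 0 ≤ p := fun k => le_max_right _ _
  have hq : 0 ≤ q := fun k => le_max_right _ _
  have hpq : x = p - q := by ext k; simp only [p, q, Pi.sub_apply]; grind
  have hqp (k : ι) : q k * p k = 0 := by
    rcases le_total (x k) 0 with h | h <;> simp [p, q, h]
  have hcross : q ⬝ᵥ (M *ᵥ p) ≤ 0 := by
    simp only [dotProduct, mulVec, Finset.mul_sum]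
    refine Finset.sum_nonpos fun k _ => Finset.sum_nonpos fun l _ => ?_
    by_cases hkl : k = l
    · rw [← hkl, mul_left_comm, hqp, mul_zero]
    · rw [mul_left_comm]
      exact mul_nonpos_of_nonpos_of_nonneg (hZ k l hkl) (mul_nonneg (hq k) (hp l))
  have hqMq : q ⬝ᵥ (M *ᵥ q) ≤ 0 := by
    have : 0 ≤ q ⬝ᵥ (M *ᵥ x) := dotProduct_nonneg_of_nonneg hq hx
    rw [hpq, mulVec_sub, dotProduct_sub] at this
    linarith
  have hq0 : q = 0 := by
    by_contra h
    simpa using (hM.dotProduct_mulVec_pos h).trans_le hqMq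
  intro k
  simpa [q] using congrFun hq0 k

theorem Matrix.mul_apply_eq_zero_of_mulVec_apply_nonneg (hZ : ∀ k l, k ≠ l → M k l ≤ 0)
    {x : ι → ℝ} (hx : 0 ≤ x) {k : ι} (hk : x k = 0) (hMx : 0 ≤ (M *ᵥ x) k) (l : ι) :
    M k l * x l = 0 := by
  have hterm : ∀ l ∈ Finset.univ, M k l * x l ≤ 0 := fun l _ => by
    by_cases hkl : k = l
    · rw [← hkl, hk, mul_zero]
    · exact mul_nonpos_of_nonpos_of_nonneg (hZ k l hkl) (hx l)
  have hsum : ∑ l, M k l * x l = 0 := le_antisymm (Finset.sum_nonpos hterm) hMx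
  exact (Finset.sum_eq_zero_iff_of_nonpos hterm).1 hsum l (Finset.mem_univ l)

end ZMatrix

theorem Matrix.PosDef.inv_apply_pos_of_adjacent_neg {n : ℕ} {M : Matrix (Fin n) (Fin n) ℝ}
    (hM : M.PosDef) (hZ : ∀ k l, k ≠ l → M k l ≤ 0)
    (hadj : ∀ k l : Fin n, |((k : ℕ) : ℤ) - ((l : ℕ) : ℤ)| = 1 → M k l < 0) (i j : Fin n) :
    0 < M⁻¹ i j := by
  set x := M⁻¹ *ᵥ Pi.single j 1
  have hMx : M *ᵥ x = Pi.single j 1 := by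
    rw [mulVec_mulVec, mul_nonsing_inv M hM.det_pos.ne'.isUnit, one_mulVec]
  have he : (0 : Fin n → ℝ) ≤ Pi.single j 1 := Pi.single_nonneg.2 zero_le_one
  have hx : 0 ≤ x := hM.nonneg_of_mulVec_nonneg_s6 hZ (hMx ▸ he)
  have hvanish (k : Fin n) (hk : x k = 0) :
      k ≠ j ∧ ∀ l : Fin n, |((k : ℕ) : ℤ) - ((l : ℕ) : ℤ)| = 1 → x l = 0 := by
    have hterm := mul_apply_eq_zero_of_mulVec_apply_nonneg hZ hx hk (hMx ▸ he k)
    refine ⟨fun hkj => ?_, fun l hl => (mul_eq_zero.1 (hterm l)).resolve_left (hadj k l hl).ne⟩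
    have : (M *ᵥ x) k = 0 := by
      simp only [mulVec, dotProduct]
      exact Finset.sum_eq_zero fun l _ => hterm l
    simp [hMx, hkj] at this
  have hne : ∀ d (k : Fin n), (((k : ℕ) : ℤ) - ((j : ℕ) : ℤ)).natAbs = d → x k ≠ 0 := by
    intro d
    induction d with
    | zero => exact fun k hk h0 => (hvanish k h0).1 (Fin.ext (by omega))
    | succ d ih =>
      intro k hk h0
      obtain ⟨l, hkl, hl⟩ : ∃ l : Fin n, |((k : ℕ) : ℤ) - ((l : ℕ) : ℤ)| = 1 ∧
          (((l : ℕ) : ℤ) - ((j : ℕ) : ℤ)).natAbs = d := by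
        rcases lt_or_gt_of_ne (hvanish k h0).1 with h | h
        · exact ⟨⟨k + 1, by omega⟩, by rw [abs_eq zero_le_one]; push_cast; omega,
            by push_cast; omega⟩
        · exact ⟨⟨k - 1, by omega⟩, by rw [abs_eq zero_le_one]; push_cast; omega,
            by push_cast; omega⟩
      exact ih l hl ((hvanish k h0).2 l hkl)
  have hxi : x i = M⁻¹ i j := by simp [x]
  exact hxi ▸ (hx i).lt_of_ne (hne _ i rfl).symm

section SignConjugation

variable {ι : Type*} [Fintype ι] [DecidableEq ι]

theorem Matrix.diagonal_mul_diagonal_eq_one {R : Type*} [CommRing R] {σ τ : ι → R}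
    (h : σ * τ = 1) : diagonal σ * diagonal τ = 1 := by
  rw [diagonal_mul_diagonal, ← Pi.mul_def, h]
  exact diagonal_one

theorem Matrix.diagonal_mul_mul_diagonal_apply {R : Type*} [CommRing R] (σ : ι → R)
    (A : Matrix ι ι R) (i j : ι) : (diagonal σ * A * diagonal σ) i j = σ i * σ j * A i j := by
  simp only [mul_diagonal, diagonal_mul]
  ring

theorem Matrix.inv_diagonal_mul_mul_diagonal {R : Type*} [CommRing R] {σ : ι → R}
    (hσ : σ * σ = 1) (A : Matrix ι ι R) :
    (diagonal σ * A * diagonal σ)⁻¹ = diagonal σ * A⁻¹ * diagonal σ := by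
  rw [mul_inv_rev, mul_inv_rev, inv_eq_left_inv (diagonal_mul_diagonal_eq_one hσ),
    Matrix.mul_assoc]

theorem Matrix.PosDef.diagonal_mul_mul_diagonal {A : Matrix ι ι ℝ} (hA : A.PosDef) {σ : ι → ℝ}
    (hσ : σ * σ = 1) : (diagonal σ * A * diagonal σ).PosDef := by
  have := hA.conjTranspose_mul_mul_same (B := diagonal σ) fun x y hxy => by
    simpa [mulVec_mulVec, diagonal_mul_diagonal_eq_one hσ] using congrArg (diagonal σ *ᵥ ·) hxy
  simpa using this

end SignConjugation

theorem neg_one_pow_add_eq_neg_one_pow_natAbs_sub {R : Type*} [Ring R] (i j : ℕ) :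
    (-1 : R) ^ (i + j) = (-1) ^ ((i : ℤ) - j).natAbs := by
  rw [neg_one_pow_eq_pow_mod_two, neg_one_pow_eq_pow_mod_two (n := ((i : ℤ) - j).natAbs)]
  congr 1
  omega

/-- For a symmetric positive definite tridiagonal matrix with strictly positive
off-diagonal entries (`A_{i,i+1} = -b_{i+1}` with `b_{i+1} < 0`), the entries of the
inverse satisfy `(A⁻¹)_{ij} < 0` when `|i-j|` is odd and `(A⁻¹)_{ij} > 0` when
`|i-j|` is even. -/
theorem stmt6 (n : ℕ) (A : Matrix (Fin n) (Fin n) ℝ) (hPD : A.PosDef)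
    (htri : ∀ i j : Fin n, 1 < |((i : ℕ) : ℤ) - ((j : ℕ) : ℤ)| → A i j = 0)
    (hoff : ∀ i j : Fin n, |((i : ℕ) : ℤ) - ((j : ℕ) : ℤ)| = 1 → 0 < A i j) :
    ∀ i j : Fin n,
      (Odd (((i : ℕ) : ℤ) - ((j : ℕ) : ℤ)).natAbs → A⁻¹ i j < 0) ∧
      (Even (((i : ℕ) : ℤ) - ((j : ℕ) : ℤ)).natAbs → 0 < A⁻¹ i j) := by
  set σ : Fin n → ℝ := fun i => (-1) ^ (i : ℕ)
  have hσ : σ * σ = 1 := funext fun i => by simp [σ, ← mul_pow]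
  have hconj (M : Matrix (Fin n) (Fin n) ℝ) (k l : Fin n) : (diagonal σ * M * diagonal σ) k l =
      (-1) ^ (((k : ℕ) : ℤ) - ((l : ℕ) : ℤ)).natAbs * M k l := by
    rw [diagonal_mul_mul_diagonal_apply, ← pow_add, neg_one_pow_add_eq_neg_one_pow_natAbs_sub]
  set B := diagonal σ * A * diagonal σ
  have hB (k l : Fin n) : B k l = (-1) ^ (((k : ℕ) : ℤ) - ((l : ℕ) : ℤ)).natAbs * A k l :=
    hconj A k l
  have hadj (k l : Fin n) (h : |((k : ℕ) : ℤ) - ((l : ℕ) : ℤ)| = 1) : B k l < 0 := by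
    have hd : (((k : ℕ) : ℤ) - ((l : ℕ) : ℤ)).natAbs = 1 := by
      rw [abs_eq zero_le_one] at h; omega
    rw [hB, hd, pow_one, neg_one_mul, neg_lt_zero]
    exact hoff k l h
  have hZ (k l : Fin n) (hkl : k ≠ l) : B k l ≤ 0 := by
    rcases (Int.one_le_abs (by omega) : 1 ≤ |((k : ℕ) : ℤ) - ((l : ℕ) : ℤ)|).eq_or_lt with h | h
    · exact (hadj k l h.symm).le
    · rw [hB, htri k l h, mul_zero]
  have hBinv := (hPD.diagonal_mul_mul_diagonal hσ).inv_apply_pos_of_adjacent_neg hZ hadj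
  intro i j
  have hsign := hconj A⁻¹ i j
  rw [← inv_diagonal_mul_mul_diagonal hσ] at hsign
  refine ⟨fun h => ?_, fun h => ?_⟩
  · rw [h.neg_one_pow] at hsign
    linarith [hBinv i j]
  · rw [h.neg_one_pow, one_mul] at hsign
    exact hsign ▸ hBinv i j
end

section
/- Let P be an n×n symmetric positive definite matrix and σ² > 0. The function r ↦ log det(σ² Q(r)^{-1}) with Q(r) = r_0 I_n + Σ_{i=1}^{n-1} r_i Q_i + σ² P^{-1}, where Q_i is the symmetric 0-1 matrix with (j,l)-entry 1 iff |j-l| = i, is strictly convex on the set of r ∈ ℝ^n for which Q(r) is positive definite. -/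
/-!
`Q` is an injective affine function of `r` (the `Qᵢ`, with `Q₀ = I`, have disjoint supports) and
`log det (σ² Q⁻¹) = n log σ² - log det Q`, so it suffices that `log det` is strictly concave on
positive definite matrices. Writing `A = Cᴴ C` and `B = Cᴴ M C`,
`log det (t A + s B) - t log det A - s log det B = ∑ᵢ (log (t + s μᵢ) - s log μᵢ)`
over the eigenvalues `μᵢ` of `M`, and each term is nonnegative by concavity of `log` on `[1, μᵢ]`,
strictly unless `μᵢ = 1`; all `μᵢ = 1` means `M = 1`, i.e. `A = B`.
-/

open Matrix

theorem StrictConvexOn.comp_affineMap_of_injective {𝕜 E F β : Type*} [Field 𝕜] [LinearOrder 𝕜]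
    [AddCommGroup E] [AddCommGroup F] [AddCommMonoid β] [PartialOrder β] [Module 𝕜 E]
    [Module 𝕜 F] [SMul 𝕜 β] {f : F → β} {s : Set F} (hf : StrictConvexOn 𝕜 s f)
    (g : E →ᵃ[𝕜] F) (hg : Function.Injective g) :
    StrictConvexOn 𝕜 (g ⁻¹' s) (f ∘ g) :=
  ⟨hf.1.affine_preimage g, fun x hx y hy hxy a b ha hb hab => by
    simpa only [Function.comp_apply, Convex.combo_affine_apply hab] using
      hf.2 hx hy (hg.ne hxy) ha hb hab⟩

namespace Matrix

variable {n : Type*}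

lemma convex_setOf_posDef : Convex ℝ {A : Matrix n n ℝ | A.PosDef} := by
  intro A hA B hB t s ht hs hts
  rcases ht.eq_or_lt with rfl | ht
  · simpa [show s = 1 by linarith] using hB
  exact (hA.smul ht).add_posSemidef (hB.posSemidef.smul hs)

variable [Fintype n] [DecidableEq n]

lemma det_conjStarAlgAut {R : Type*} [CommRing R] [StarRing R] (u : unitary (Matrix n n R))
    (x : Matrix n n R) : (Unitary.conjStarAlgAut R _ u x).det = x.det := by
  rw [Unitary.conjStarAlgAut_apply, det_mul_comm, ← mul_assoc, Unitary.coe_star_mul_self,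
    one_mul]

lemma IsHermitian.det_smul_one_add_smul {M : Matrix n n ℝ} (hM : M.IsHermitian) (a b : ℝ) :
    (a • 1 + b • M).det = ∏ i, (a + b * hM.eigenvalues i) := by
  have hdiag : a • 1 + b • M = Unitary.conjStarAlgAut ℝ _ hM.eigenvectorUnitary
      (diagonal fun i => a + b * hM.eigenvalues i) := by
    conv_lhs => rw [hM.spectral_theorem]
    rw [← map_one (Unitary.conjStarAlgAut ℝ _ hM.eigenvectorUnitary), ← map_smul, ← map_smul,
      ← map_add, ← diagonal_one, ← diagonal_smul, ← diagonal_smul, diagonal_add]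
    simp
  rw [hdiag, det_conjStarAlgAut, det_diagonal]

lemma IsHermitian.eq_one_of_eigenvalues_eq_one {M : Matrix n n ℝ} (hM : M.IsHermitian)
    (h : ∀ i, hM.eigenvalues i = 1) : M = 1 := by
  rw [hM.spectral_theorem, ← map_one (Unitary.conjStarAlgAut ℝ _ hM.eigenvectorUnitary),
    ← diagonal_one]
  congr 2
  ext i
  simp [h]

lemma PosDef.mul_log_det_lt_log_det_smul_one_add_smul {M : Matrix n n ℝ} (hM : M.PosDef)
    (hM1 : M ≠ 1) {t s : ℝ} (ht : 0 < t) (hs : 0 < s) (hts : t + s = 1) :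
    s * Real.log M.det < Real.log (t • 1 + s • M).det := by
  set μ := hM.1.eigenvalues
  have hμ : ∀ i, 0 < μ i := hM.eigenvalues_pos
  obtain ⟨i₀, hi₀⟩ : ∃ i, μ i ≠ 1 := by
    by_contra! h
    exact hM1 (hM.1.eq_one_of_eigenvalues_eq_one h)
  have hle : ∀ i ∈ Finset.univ, s * Real.log (μ i) ≤ Real.log (t + s * μ i) := fun i _ => by
    simpa using strictConcaveOn_log_Ioi.concaveOn.2 (Set.mem_Ioi.2 one_pos)
      (Set.mem_Ioi.2 (hμ i)) ht.le hs.le hts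
  have hlt : s * Real.log (μ i₀) < Real.log (t + s * μ i₀) := by
    simpa using strictConcaveOn_log_Ioi.2 (Set.mem_Ioi.2 one_pos) (Set.mem_Ioi.2 (hμ i₀))
      hi₀.symm ht hs hts
  rw [hM.1.det_smul_one_add_smul, hM.1.det_eq_prod_eigenvalues, Real.log_prod, Real.log_prod,
    Finset.mul_sum]
  · exact Finset.sum_lt_sum hle ⟨i₀, Finset.mem_univ _, hlt⟩
  · exact fun i _ => (add_pos ht (mul_pos hs (hμ i))).ne'
  · exact fun i _ => by simpa using (hμ i).ne'

lemma det_star_mul_mul {R : Type*} [CommRing R] [StarRing R] (C X : Matrix n n R) :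
    (star C * X * C).det = (star C * C).det * X.det := by
  simp only [det_mul]
  ring

open scoped MatrixOrder in
theorem strictConcaveOn_log_det :
    StrictConcaveOn ℝ {A : Matrix n n ℝ | A.PosDef} (fun A => Real.log A.det) := by
  refine ⟨convex_setOf_posDef, fun A hA B hB hAB t s ht hs hts => ?_⟩
  obtain ⟨C, rfl⟩ := CStarAlgebra.nonneg_iff_eq_star_mul_self.mp hA.posSemidef.nonneg
  have hC : IsUnit C.det := (right_ne_zero_of_mul (det_mul (star C) C ▸ hA.det_pos.ne')).isUnit
  obtain ⟨M, hM, rfl⟩ : ∃ M : Matrix n n ℝ, M.PosDef ∧ B = star C * M * C := by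
    refine ⟨star C⁻¹ * B * C⁻¹, (isUnit_nonsing_inv_iff.2 <| (isUnit_iff_isUnit_det C).2 hC)
      |>.posDef_star_left_conjugate_iff.2 hB, ?_⟩
    rw [← mul_assoc, ← mul_assoc, ← star_mul, nonsing_inv_mul C hC, star_one, one_mul]
    exact (nonsing_inv_mul_cancel_right C B hC).symm
  have hM1 : M ≠ 1 := by rintro rfl; simp at hAB
  have hcomb : t • (star C * C) + s • (star C * M * C)
      = star C * (t • 1 + s • M) * C := by
    simp only [mul_add, add_mul, mul_smul_comm, smul_mul_assoc, mul_one]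
  have hPD : (t • (1 : Matrix n n ℝ) + s • M).PosDef :=
    convex_setOf_posDef PosDef.one hM ht.le hs.le hts
  simp only [smul_eq_mul]
  rw [hcomb, det_star_mul_mul, det_star_mul_mul, Real.log_mul hA.det_pos.ne' hM.det_pos.ne',
    Real.log_mul hA.det_pos.ne' hPD.det_pos.ne']
  linear_combination (Real.log (star C * C : Matrix n n ℝ).det) * hts +
    hM.mul_log_det_lt_log_det_smul_one_add_smul hM1 ht hs hts

lemma log_det_smul_inv {A : Matrix n n ℝ} (hA : A.det ≠ 0) {c : ℝ} (hc : c ≠ 0) :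
    Real.log (c • A⁻¹).det = Fintype.card n * Real.log c - Real.log A.det := by
  rw [det_smul, det_nonsing_inv, Ring.inverse_eq_inv,
    Real.log_mul (pow_ne_zero _ hc) (inv_ne_zero hA), Real.log_pow, Real.log_inv, sub_eq_add_neg]

theorem strictConvexOn_log_det_smul_inv {c : ℝ} (hc : c ≠ 0) :
    StrictConvexOn ℝ {A : Matrix n n ℝ | A.PosDef} (fun A => Real.log (c • A⁻¹).det) :=
  (strictConcaveOn_log_det.neg.add_const (Fintype.card n * Real.log c)).congr fun A hA => by
    simp only [Pi.add_apply, Pi.neg_apply, log_det_smul_inv hA.det_pos.ne' hc]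
    ring

end Matrix

def symmToeplitzBasis (R : Type*) [Zero R] [One R] (n : ℕ) (i : Fin n) :
    Matrix (Fin n) (Fin n) R :=
  of fun j l => if |((j : ℕ) : ℤ) - ((l : ℕ) : ℤ)| = ((i : ℕ) : ℤ) then 1 else 0

lemma symmToeplitzBasis_apply_zero_left {R : Type*} [Zero R] [One R] {n : ℕ} (i l : Fin n) :
    symmToeplitzBasis R n i ⟨0, l.pos⟩ l = if i = l then 1 else 0 := by
  simp [symmToeplitzBasis, eq_comm (a := i), Fin.ext_iff]

lemma linearIndependent_symmToeplitzBasis (R : Type*) [Semiring R] (n : ℕ) :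
    LinearIndependent R (symmToeplitzBasis R n) := by
  rw [linearIndependent_iff_injective_fintypeLinearCombination]
  intro f g hfg
  funext l
  simpa [Fintype.linearCombination_apply, Matrix.sum_apply, symmToeplitzBasis_apply_zero_left]
    using congr_fun₂ hfg ⟨0, l.pos⟩ l

theorem stmt7_general (n : ℕ)
    (P : Matrix (Fin n) (Fin n) ℝ)
    (σ2 : ℝ) (hσ : 0 < σ2)
    (Qi : Fin n → Matrix (Fin n) (Fin n) ℝ)
    (hQi : ∀ i j l : Fin n,
      Qi i j l = if |((j : ℕ) : ℤ) - ((l : ℕ) : ℤ)| = ((i : ℕ) : ℤ) then 1 else 0)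
    (Q : (Fin n → ℝ) → Matrix (Fin n) (Fin n) ℝ)
    (hQ : ∀ r : Fin n → ℝ, Q r = ∑ i : Fin n, r i • Qi i + σ2 • P⁻¹) :
    StrictConvexOn ℝ {r : Fin n → ℝ | (Q r).PosDef}
      (fun r => Real.log ((σ2 • (Q r)⁻¹).det)) := by
  obtain rfl : Qi = symmToeplitzBasis ℝ n := funext fun i => Matrix.ext (hQi i)
  set g : (Fin n → ℝ) →ᵃ[ℝ] Matrix (Fin n) (Fin n) ℝ :=
    (Fintype.linearCombination ℝ (symmToeplitzBasis ℝ n)).toAffineMap +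
      AffineMap.const ℝ _ (σ2 • P⁻¹)
  obtain rfl : Q = g := funext fun r => by simp [hQ, g, Fintype.linearCombination_apply]
  have hinj : Function.Injective g := by
    rw [← AffineMap.linear_injective_iff]
    simpa [g] using (linearIndependent_symmToeplitzBasis ℝ n).fintypeLinearCombination_injective
  exact (strictConvexOn_log_det_smul_inv hσ.ne').comp_affineMap_of_injective g hinj

/-- The function `r ↦ log det(σ² Q(r)⁻¹)` with
`Q(r) = r_0 I + ∑_{i=1}^{n-1} r_i Q_i + σ² P⁻¹` (note `Q_0 = I`) is strictly convex
on the set of `r` for which `Q(r)` is positive definite. -/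
theorem stmt7 (n : ℕ) (hn : 0 < n)
    (P : Matrix (Fin n) (Fin n) ℝ) (hP : P.PosDef)
    (σ2 : ℝ) (hσ : 0 < σ2)
    (Qi : Fin n → Matrix (Fin n) (Fin n) ℝ)
    (hQi : ∀ i j l : Fin n,
      Qi i j l = if |((j : ℕ) : ℤ) - ((l : ℕ) : ℤ)| = ((i : ℕ) : ℤ) then 1 else 0)
    (Q : (Fin n → ℝ) → Matrix (Fin n) (Fin n) ℝ)
    (hQ : ∀ r : Fin n → ℝ, Q r = ∑ i : Fin n, r i • Qi i + σ2 • P⁻¹) :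
    StrictConvexOn ℝ {r : Fin n → ℝ | (Q r).PosDef}
      (fun r => Real.log ((σ2 • (Q r)⁻¹).det)) :=
  stmt7_general n P σ2 hσ Qi hQi Q hQ
end

section
/- The image of the sphere 𝒰 = {u ∈ ℝ^N : u^T u = ℰ} under the quadratic map f(u) = (u^T L_0 u, ..., u^T L_{n-1} u), with L_j = (C^j + (C^j)^T)/2 for the cyclic permutation matrix C, is a convex polytope in ℝ^n; specifically, it is the convex hull of finitely many points. -/
/-!
Index the coordinates by the ring `Fin N ≅ ℤ/N` and let `ψ` be its standard character
`x ↦ exp (2πix/N)`. The `j`-th coordinate of `f u` is the cyclic autocorrelation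
`r_u(j) = ∑ᵢ uᵢ u_{i+j}`, and orthogonality of characters gives
`N · r_u(j) = ∑ₖ |û(k)|² cos (2πjk/N)`, with `û` the discrete Fourier transform of `u`.
On the sphere `∑ₖ |û(k)|² = N ℰ`, so `r_u` is a convex combination of the points
`p_k = ℰ (cos (2πjk/N))_j`. Conversely, since `p_{-k} = p_k`, any convex combination of the
`p_k` may be taken with even weights `t`, and then the inverse transform of `√(ℰ t / N)` is a
real vector on the sphere with autocorrelation `∑ₖ t_k p_k`. Restricting to the first `n`
coordinates is linear, hence commutes with taking convex hulls.
-/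

open Matrix Finset

theorem convexHull_range_eq_image_stdSimplex {ι E : Type*} [Fintype ι] [AddCommGroup E]
    [Module ℝ E] (v : ι → E) :
    convexHull ℝ (Set.range v) = (fun t => ∑ k, t k • v k) '' stdSimplex ℝ ι := by
  classical
  have h := (Fintype.linearCombination ℝ v).image_convexHull (Set.range fun i => Pi.single i 1)
  rw [convexHull_rangle_single_eq_stdSimplex, ← Set.range_comp] at h
  simpa [Function.comp_def, Fintype.linearCombination_apply_single,
    funext (Fintype.linearCombination_apply ℝ v)] using h.symm

lemma AddChar.IsPrimitive.compAddMonoidHom_ringEquiv {A B M : Type*} [CommRing A] [CommRing B]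
    [CommMonoid M] {ψ : AddChar B M} (hψ : ψ.IsPrimitive) (e : A ≃+* B) :
    (ψ.compAddMonoidHom e.toAddMonoidHom).IsPrimitive := by
  intro a ha h
  refine hψ (e.map_ne_zero_iff.mpr ha) <| AddChar.ext _ _ fun b => ?_
  obtain ⟨x, rfl⟩ := e.surjective b
  simpa using DFunLike.congr_fun h x

lemma AddChar.re_map_neg {G : Type*} [AddCommGroup G] [Finite G] (ψ : AddChar G ℂ) (x : G) :
    (ψ (-x)).re = (ψ x).re := by
  rw [ψ.map_neg_eq_conj, Complex.conj_re]

section Autocorrelation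

variable {G : Type*} [AddZeroClass G] [Fintype G]

def autocorrelation (u : G → ℝ) (m : G) : ℝ := ∑ i, u i * u (i + m)

lemma autocorrelation_zero (u : G → ℝ) : autocorrelation u 0 = u ⬝ᵥ u := by
  simp [autocorrelation, dotProduct]

end Autocorrelation

section Spectral

variable {R : Type*} [CommRing R] {ψ : AddChar R ℂ}

def spectralPoint (ψ : AddChar R ℂ) (k : R) (m : R) : ℝ := (ψ (k * m)).re

@[simp] lemma spectralPoint_apply_zero (k : R) : spectralPoint ψ k 0 = 1 := by
  simp [spectralPoint]

variable [Fintype R]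

lemma spectralPoint_neg (k : R) : spectralPoint ψ (-k) = spectralPoint ψ k := by
  ext m
  rw [spectralPoint, spectralPoint, neg_mul, ψ.re_map_neg]

lemma sum_smul_spectralPoint_symmetrize (t : R → ℝ) :
    ∑ k, ((t k + t (-k)) / 2) • spectralPoint ψ k = ∑ k, t k • spectralPoint ψ k := by
  have hneg : ∑ k, t (-k) • spectralPoint ψ k = ∑ k, t k • spectralPoint ψ k :=
    Fintype.sum_equiv (Equiv.neg R) _ _ fun k => by simp [spectralPoint_neg]
  simp_rw [div_eq_inv_mul, mul_smul, ← smul_sum, add_smul, sum_add_distrib, hneg, ← two_smul ℝ,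
    smul_smul]
  norm_num

lemma sum_mul_sum_eq_card_mul_sum_neg (hψ : ψ.IsPrimitive) (a b : R → ℂ) :
    ∑ x, (∑ k, a k * ψ (k * x)) * (∑ l, b l * ψ (l * x)) =
      Fintype.card R * ∑ k, a k * b (-k) := by
  classical
  calc _ = ∑ k, ∑ l, a k * b l * ∑ x, ψ (x * (k + l)) := by
        simp_rw [sum_mul_sum, mul_sum]
        rw [sum_comm]
        refine sum_congr rfl fun k _ => ?_
        rw [sum_comm]
        refine sum_congr rfl fun l _ => sum_congr rfl fun x _ => ?_
        rw [mul_add, AddChar.map_add_eq_mul]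
        ring_nf
    _ = _ := by
        simp_rw [AddChar.sum_mulShift _ hψ, add_eq_zero_iff_neg_eq, Nat.cast_ite, Nat.cast_zero,
          mul_ite, mul_zero, sum_ite_eq, mem_univ, if_true, mul_sum]
        exact sum_congr rfl fun k _ => by ring

lemma autocorrelation_eq_sum_smul_spectralPoint (hψ : ψ.IsPrimitive) (u : R → ℝ) :
    autocorrelation u =
      ∑ k, (Complex.normSq (∑ i, u i * ψ (i * k)) / Fintype.card R) • spectralPoint ψ k := by
  ext m
  have hconj (k : R) : ∑ l, (u (m - l) : ℂ) * ψ (l * k) =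
      (starRingEnd ℂ) (∑ i, u i * ψ (i * k)) * ψ (k * m) := by
    rw [map_sum, sum_mul, ← (Equiv.subLeft m).sum_comp]
    refine sum_congr rfl fun i _ => ?_
    simp only [Equiv.subLeft_apply, sub_sub_cancel, map_mul, Complex.conj_ofReal,
      ← AddChar.map_neg_eq_conj, mul_assoc, ← AddChar.map_add_eq_mul]
    ring_nf
  have h := sum_mul_sum_eq_card_mul_sum_neg hψ (fun i => (u i : ℂ)) (fun l => (u (m - l) : ℂ))
  simp_rw [hconj, ← mul_assoc, Complex.mul_conj, sub_neg_eq_add, add_comm m] at h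
  have hre := congrArg Complex.re h
  simp only [Complex.re_sum, Complex.mul_re, Complex.natCast_re,
    Complex.natCast_im, Complex.ofReal_re, Complex.ofReal_im, zero_mul, sub_zero] at hre
  have hcard : (Fintype.card R : ℝ) ≠ 0 := Nat.cast_ne_zero.mpr Fintype.card_ne_zero
  simp only [Finset.sum_apply, Pi.smul_apply, smul_eq_mul, div_mul_eq_mul_div, ← sum_div]
  rw [eq_div_iff hcard, mul_comm, autocorrelation, ← hre]
  rfl

lemma exists_autocorrelation_eq_sum_smul_spectralPoint (hψ : ψ.IsPrimitive) {t : R → ℝ}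
    (ht0 : ∀ k, 0 ≤ t k) (ht : ∀ k, t (-k) = t k) :
    ∃ u : R → ℝ, autocorrelation u = ∑ k, t k • spectralPoint ψ k := by
  set a : R → ℝ := fun k => √(t k / Fintype.card R)
  have ha (k : R) : a k * a (-k) = t k / Fintype.card R := by
    simp only [a, ht]
    exact Real.mul_self_sqrt (div_nonneg (ht0 k) (Nat.cast_nonneg _))
  set v : R → ℂ := fun i => ∑ k, (a k : ℂ) * ψ (k * i)
  have hv (i : R) : ((v i).re : ℂ) = v i := by
    rw [← Complex.conj_eq_iff_re, map_sum]
    refine Fintype.sum_equiv (Equiv.neg R) _ _ fun k => ?_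
    simp [a, ht, ← AddChar.map_neg_eq_conj]
  refine ⟨fun i => (v i).re, funext fun m => ?_⟩
  have hshift (i : R) : ∑ l, (a l * ψ (l * m) : ℂ) * ψ (l * i) = v (i + m) := by
    refine sum_congr rfl fun l _ => ?_
    rw [mul_assoc, ← AddChar.map_add_eq_mul, mul_add, add_comm]
  have h := sum_mul_sum_eq_card_mul_sum_neg hψ (fun k => (a k : ℂ)) (fun l => a l * ψ (l * m))
  simp_rw [hshift, ← mul_assoc, ← Complex.ofReal_mul, ha] at h
  have hu : (autocorrelation (fun i => (v i).re) m : ℂ) = ∑ i, v i * v (i + m) := by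
    push_cast [autocorrelation]
    exact sum_congr rfl fun i _ => by rw [hv, hv]
  have hcard : (Fintype.card R : ℂ) ≠ 0 := Nat.cast_ne_zero.mpr Fintype.card_ne_zero
  have hre := congrArg Complex.re (hu.trans h)
  rw [Complex.ofReal_re, mul_sum, Complex.re_sum] at hre
  rw [hre, Finset.sum_apply]
  refine sum_congr rfl fun k _ => ?_
  rw [← mul_assoc, Complex.ofReal_div, Complex.ofReal_natCast, mul_div_cancel₀ _ hcard,
    Complex.re_ofReal_mul, neg_mul, ψ.re_map_neg]
  rfl

theorem image_autocorrelation_sphere (hψ : ψ.IsPrimitive) {E : ℝ} (hE : 0 < E) :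
    autocorrelation '' {u : R → ℝ | u ⬝ᵥ u = E} =
      convexHull ℝ (Set.range fun k => E • spectralPoint ψ k) := by
  rw [convexHull_range_eq_image_stdSimplex]
  ext x
  constructor
  · rintro ⟨u, hu : u ⬝ᵥ u = E, rfl⟩
    set w : R → ℝ := fun k => Complex.normSq (∑ i, u i * ψ (i * k)) / Fintype.card R
    have hw0 (k : R) : 0 ≤ w k := div_nonneg (Complex.normSq_nonneg _) (Nat.cast_nonneg _)
    have hw := autocorrelation_eq_sum_smul_spectralPoint hψ u
    have hw1 : ∑ k, w k = E := by
      simpa [autocorrelation_zero, hu] using (congrFun hw 0).symm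
    refine ⟨fun k => w k / E, ⟨fun k => div_nonneg (hw0 k) hE.le, ?_⟩, ?_⟩
    · rw [← sum_div, hw1, div_self hE.ne']
    · simp_rw [hw, smul_smul, div_mul_cancel₀ _ hE.ne']
      rfl
  · rintro ⟨t, ⟨ht0, ht1⟩, rfl⟩
    obtain ⟨u, hu⟩ := exists_autocorrelation_eq_sum_smul_spectralPoint hψ
      (t := fun k => E * ((t k + t (-k)) / 2))
      (fun k => by have := ht0 k; have := ht0 (-k); positivity)
      (fun k => by rw [neg_neg, add_comm])
    have hu' : autocorrelation u = ∑ k, t k • E • spectralPoint ψ k := by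
      simp_rw [hu, mul_smul, ← smul_sum, sum_smul_spectralPoint_symmetrize, smul_sum,
        smul_comm E]
    refine ⟨u, ?_, by rw [hu']⟩
    change u ⬝ᵥ u = E
    rw [← autocorrelation_zero, hu']
    simp [Finset.sum_apply, ← sum_mul, ht1]

end Spectral

lemma dotProduct_half_add_transpose_mulVec {ι : Type*} [Fintype ι] (A : Matrix ι ι ℝ)
    (u : ι → ℝ) : u ⬝ᵥ ((2 : ℝ)⁻¹ • (A + Aᵀ)) *ᵥ u = u ⬝ᵥ A *ᵥ u := by
  have h : u ⬝ᵥ Aᵀ *ᵥ u = u ⬝ᵥ A *ᵥ u := by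
    rw [dotProduct_mulVec, vecMul_transpose, dotProduct_comm]
  rw [smul_mulVec, add_mulVec, dotProduct_smul, dotProduct_add, h, smul_eq_mul]
  ring

section CyclicShift

open Fin.CommRing

variable {N : ℕ} [NeZero N] {C : Matrix (Fin N) (Fin N) ℝ}

lemma mulVec_eq_comp_add_one
    (hC : ∀ i j : Fin N, C i j = if (j : ℕ) = ((i : ℕ) + 1) % N then 1 else 0) (u : Fin N → ℝ) :
    C *ᵥ u = fun i => u (i + 1) := by
  ext i
  have hj (j : Fin N) : (j : ℕ) = ((i : ℕ) + 1) % N ↔ j = i + 1 := by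
    rw [Fin.ext_iff, Fin.val_add, Fin.val_one', Nat.add_mod_mod]
  simp [mulVec, dotProduct, hC, hj]

lemma pow_mulVec_eq_comp_add
    (hC : ∀ i j : Fin N, C i j = if (j : ℕ) = ((i : ℕ) + 1) % N then 1 else 0) (m : ℕ)
    (u : Fin N → ℝ) : C ^ m *ᵥ u = fun i => u (i + m) := by
  induction m generalizing u with
  | zero => simp
  | succ m ih =>
    rw [pow_succ, ← mulVec_mulVec, ih, mulVec_eq_comp_add_one hC]
    ext i
    simp [add_assoc]

lemma dotProduct_half_add_transpose_pow_mulVec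
    (hC : ∀ i j : Fin N, C i j = if (j : ℕ) = ((i : ℕ) + 1) % N then 1 else 0) (m : ℕ)
    (u : Fin N → ℝ) :
    u ⬝ᵥ ((2 : ℝ)⁻¹ • (C ^ m + (C ^ m)ᵀ)) *ᵥ u = autocorrelation u m := by
  rw [dotProduct_half_add_transpose_mulVec, pow_mulVec_eq_comp_add hC]
  rfl

variable (N) in
noncomputable def finStdAddChar : AddChar (Fin N) ℂ :=
  ZMod.stdAddChar.compAddMonoidHom (ZMod.finEquiv N).toAddMonoidHom

lemma isPrimitive_finStdAddChar : (finStdAddChar N).IsPrimitive :=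
  (ZMod.isPrimitive_stdAddChar N).compAddMonoidHom_ringEquiv _

end CyclicShift

theorem stmt13_general (N n : ℕ) (hN : 0 < N) (E : ℝ) (hE : 0 < E)
    (C : Matrix (Fin N) (Fin N) ℝ)
    (hC : ∀ i j : Fin N, C i j = if (j : ℕ) = ((i : ℕ) + 1) % N then 1 else 0)
    (L : Fin n → Matrix (Fin N) (Fin N) ℝ)
    (hL : ∀ j : Fin n, L j = (2 : ℝ)⁻¹ • (C ^ (j : ℕ) + (C ^ (j : ℕ))ᵀ))
    (f : (Fin N → ℝ) → Fin n → ℝ)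
    (hf : ∀ (u : Fin N → ℝ) (j : Fin n), f u j = u ⬝ᵥ (L j).mulVec u) :
    ∃ s : Finset (Fin n → ℝ),
      f '' {u : Fin N → ℝ | u ⬝ᵥ u = E} = convexHull ℝ (s : Set (Fin n → ℝ)) := by
  have : NeZero N := ⟨hN.ne'⟩
  open Fin.CommRing in (
  let π : (Fin N → ℝ) →ₗ[ℝ] Fin n → ℝ := LinearMap.funLeft ℝ ℝ fun j => ((j : ℕ) : Fin N)
  have hf : f = π ∘ autocorrelation := by
    ext u j
    rw [hf, hL, dotProduct_half_add_transpose_pow_mulVec hC]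
    rfl
  refine ⟨univ.image (π ∘ fun k => E • spectralPoint (finStdAddChar N) k), ?_⟩
  rw [hf, Set.image_comp, image_autocorrelation_sphere isPrimitive_finStdAddChar hE,
    LinearMap.image_convexHull, ← Set.range_comp, coe_image, coe_univ, Set.image_univ])

/-- The image of the sphere `{u : uᵀu = ℰ}` under the quadratic map
`f(u) = (uᵀL_0 u, ..., uᵀL_{n-1} u)`, with `L_j = (C^j + (C^j)ᵀ)/2` for the cyclic
permutation matrix `C`, is a convex polytope: the convex hull of finitely many
points. -/
theorem stmt13 (N n : ℕ) (hN : 0 < N) (hn : n ≤ N) (E : ℝ) (hE : 0 < E)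
    (C : Matrix (Fin N) (Fin N) ℝ)
    (hC : ∀ i j : Fin N, C i j = if (j : ℕ) = ((i : ℕ) + 1) % N then 1 else 0)
    (L : Fin n → Matrix (Fin N) (Fin N) ℝ)
    (hL : ∀ j : Fin n, L j = (2 : ℝ)⁻¹ • (C ^ (j : ℕ) + (C ^ (j : ℕ))ᵀ))
    (f : (Fin N → ℝ) → Fin n → ℝ)
    (hf : ∀ (u : Fin N → ℝ) (j : Fin n), f u j = u ⬝ᵥ (L j).mulVec u) :
    ∃ s : Finset (Fin n → ℝ),
      f '' {u : Fin N → ℝ | u ⬝ᵥ u = E} = convexHull ℝ (s : Set (Fin n → ℝ)) :=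
  stmt13_general N n hN E hE C hC L hL f hf
end

section
/- Let P = cI_n with c > 0, σ² > 0, ℰ > 0, and Q(r) = r_0 I_n + Σ_{i=1}^{n-1} r_i Q_i + σ² P^{-1}. Then r† = (ℰ, 0, ..., 0) is the unique minimizer over the feasible set ℱ (the image of the sphere {u^T u = ℰ} under the quadratic map f) of both r ↦ log det(σ² Q(r)^{-1}) and r ↦ Tr(σ² Q(r)^{-1}). -/
/-!
For `r = f(u)` with `uᵀu = ℰ`, the matrix `∑ rᵢ Qᵢ` is the symmetric Toeplitz matrix with first
row `r`; it equals the Gram matrix `V Vᵀ` of the cyclic shifts `V_{jk} = u_{k-j}`, so it is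
positive semidefinite with constant diagonal `ℰ`. Hence `Q(r)` is positive definite with trace
`n a`, `a = ℰ + σ²/c`, and by strict Jensen applied to its eigenvalues (with `log` and `x ↦ x⁻¹`)
`det Q(r) < aⁿ` and `Tr Q(r)⁻¹ > n/a` unless all eigenvalues equal `a`, i.e. `Q(r) = a I = Q(r†)`.
Reading off the first row, this happens only for `r = r†`.
-/

open Matrix Finset

theorem StrictConvexOn.card_mul_lt_sum {ι : Type*} [Fintype ι] {s : Set ℝ} {f : ℝ → ℝ}
    (hf : StrictConvexOn ℝ s f) {p : ι → ℝ} {a : ℝ} (hp : ∀ i, p i ∈ s)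
    (hsum : ∑ i, p i = Fintype.card ι * a) (hne : ∃ i, p i ≠ a) :
    Fintype.card ι * f a < ∑ i, f (p i) := by
  obtain ⟨i₀, hi₀⟩ := hne
  have hcard : (0 : ℝ) < Fintype.card ι := by
    exact_mod_cast Fintype.card_pos_iff.mpr ⟨i₀⟩
  have hmean : ∑ i, (Fintype.card ι : ℝ)⁻¹ • p i = a := by
    rw [← smul_sum, hsum, smul_eq_mul, inv_mul_cancel_left₀ hcard.ne']
  have hnonconst : ∃ j ∈ univ, ∃ k ∈ univ, p j ≠ p k := by
    by_contra! hconst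
    refine hi₀ (mul_left_cancel₀ hcard.ne' ?_)
    rw [← hsum, Finset.sum_congr rfl fun j _ => hconst j (mem_univ _) i₀ (mem_univ _)]
    simp
  have := hf.map_sum_lt (t := univ) (w := fun _ => (Fintype.card ι : ℝ)⁻¹)
    (fun _ _ => by positivity) (by simp [hcard.ne']) (fun i _ => hp i) hnonconst
  rw [hmean, ← smul_sum, smul_eq_mul] at this
  calc (Fintype.card ι : ℝ) * f a < Fintype.card ι * ((Fintype.card ι : ℝ)⁻¹ * ∑ i, f (p i)) :=
        mul_lt_mul_of_pos_left this hcard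
    _ = ∑ i, f (p i) := mul_inv_cancel_left₀ hcard.ne' _

theorem StrictConcaveOn.sum_lt_card_mul {ι : Type*} [Fintype ι] {s : Set ℝ} {f : ℝ → ℝ}
    (hf : StrictConcaveOn ℝ s f) {p : ι → ℝ} {a : ℝ} (hp : ∀ i, p i ∈ s)
    (hsum : ∑ i, p i = Fintype.card ι * a) (hne : ∃ i, p i ≠ a) :
    ∑ i, f (p i) < Fintype.card ι * f a := by
  simpa using hf.neg.card_mul_lt_sum hp hsum hne

namespace Matrix

variable {ι : Type*} [Fintype ι] {A : Matrix ι ι ℝ}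

theorem PosDef.pos_of_trace_eq [Nonempty ι] (hA : A.PosDef) {a : ℝ}
    (htr : A.trace = Fintype.card ι * a) : 0 < a :=
  pos_of_mul_pos_right (htr ▸ hA.trace_pos) (Nat.cast_nonneg _)

variable [DecidableEq ι]

theorem IsHermitian.exists_eigenvalues_ne_of_ne_smul_one (hA : A.IsHermitian) {a : ℝ}
    (hne : A ≠ a • 1) : ∃ i, hA.eigenvalues i ≠ a := by
  by_contra! h
  refine hne ?_
  rw [hA.spectral_theorem]
  have hD : diagonal (RCLike.ofReal ∘ hA.eigenvalues) = algebraMap ℝ (Matrix ι ι ℝ) a := by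
    rw [algebraMap_eq_diagonal]; exact congrArg diagonal (funext h)
  rw [hD, AlgEquivClass.commutes, Algebra.algebraMap_eq_smul_one]

theorem PosDef.trace_inv_eq_sum_inv_eigenvalues (hA : A.PosDef) :
    A⁻¹.trace = ∑ i, (hA.1.eigenvalues i)⁻¹ := by
  set U := hA.1.eigenvectorUnitary
  set D := diagonal (RCLike.ofReal ∘ hA.1.eigenvalues : ι → ℝ)
  have hD : D * diagonal (fun i => (hA.1.eigenvalues i)⁻¹) = 1 := by
    rw [diagonal_mul_diagonal, ← diagonal_one]
    exact congrArg diagonal (funext fun i => mul_inv_cancel₀ (hA.eigenvalues_pos i).ne')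
  have hinv : A⁻¹ = Unitary.conjStarAlgAut ℝ _ U (diagonal fun i => (hA.1.eigenvalues i)⁻¹) := by
    refine inv_eq_right_inv ?_
    calc A * _ = Unitary.conjStarAlgAut ℝ _ U D * _ := congrArg (· * _) hA.1.spectral_theorem
      _ = 1 := by rw [← map_mul, hD, map_one]
  rw [hinv, Unitary.conjStarAlgAut_apply, trace_mul_cycle, Unitary.coe_star_mul_self, one_mul,
    trace_diagonal]

theorem PosDef.sum_eigenvalues_eq_trace (hA : A.PosDef) : ∑ i, hA.1.eigenvalues i = A.trace := by
  simpa using hA.1.trace_eq_sum_eigenvalues.symm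

theorem PosDef.det_lt_pow_of_trace_eq (hA : A.PosDef) {a : ℝ}
    (htr : A.trace = Fintype.card ι * a) (hne : A ≠ a • 1) : A.det < a ^ Fintype.card ι := by
  have hpos := hA.eigenvalues_pos
  have hsum := hA.sum_eigenvalues_eq_trace.trans htr
  obtain ⟨i, hi⟩ := hA.1.exists_eigenvalues_ne_of_ne_smul_one hne
  have : Nonempty ι := ⟨i⟩
  have ha := hA.pos_of_trace_eq htr
  have hlog := strictConcaveOn_log_Ioi.sum_lt_card_mul (fun i => hpos i) hsum ⟨i, hi⟩
  have hdet : A.det = ∏ i, hA.1.eigenvalues i := by simpa using hA.1.det_eq_prod_eigenvalues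
  rwa [← Real.log_lt_log_iff hA.det_pos (by positivity), hdet,
    Real.log_prod (fun i _ => (hpos i).ne'), Real.log_pow]

theorem PosDef.card_mul_inv_lt_trace_inv (hA : A.PosDef) {a : ℝ}
    (htr : A.trace = Fintype.card ι * a) (hne : A ≠ a • 1) : Fintype.card ι * a⁻¹ < A⁻¹.trace := by
  have hpos := hA.eigenvalues_pos
  have hsum := hA.sum_eigenvalues_eq_trace.trans htr
  obtain ⟨i, hi⟩ := hA.1.exists_eigenvalues_ne_of_ne_smul_one hne
  rw [hA.trace_inv_eq_sum_inv_eigenvalues]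
  simpa using (strictConvexOn_zpow (m := -1) (by decide) (by decide)).card_mul_lt_sum
    (fun i => hpos i) hsum ⟨i, hi⟩

theorem det_smul_nonsing_inv {K : Type*} [Field K] (k : K) (B : Matrix ι ι K) :
    (k • B⁻¹).det = k ^ Fintype.card ι / B.det := by
  rw [det_smul, det_nonsing_inv, Ring.inverse_eq_inv', div_eq_mul_inv]

theorem inv_smul_one {K : Type*} [Field K] (k : K) :
    (k • (1 : Matrix ι ι K))⁻¹ = k⁻¹ • 1 := by
  rcases eq_or_ne k 0 with rfl | hk
  · simp
  · exact inv_eq_left_inv (by rw [smul_mul_smul_comm, inv_mul_cancel₀ hk, one_mul, one_smul])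

theorem PosDef.log_det_smul_inv_lt (hA : A.PosDef) {a σ : ℝ} (hσ : 0 < σ)
    (htr : A.trace = Fintype.card ι * a) (hne : A ≠ a • 1) :
    Real.log (σ • (a • 1 : Matrix ι ι ℝ)⁻¹).det < Real.log (σ • A⁻¹).det := by
  have hdet := hA.det_lt_pow_of_trace_eq htr hne
  rw [det_smul_nonsing_inv, det_smul_nonsing_inv, det_smul, det_one, mul_one]
  exact Real.log_lt_log (div_pos (by positivity) (hA.det_pos.trans hdet))
    (div_lt_div_of_pos_left (by positivity) hA.det_pos hdet)

theorem PosDef.trace_smul_inv_lt (hA : A.PosDef) {a σ : ℝ} (hσ : 0 < σ)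
    (htr : A.trace = Fintype.card ι * a) (hne : A ≠ a • 1) :
    (σ • (a • 1 : Matrix ι ι ℝ)⁻¹).trace < (σ • A⁻¹).trace := by
  rw [inv_smul_one, trace_smul, trace_smul, trace_smul, trace_one, smul_eq_mul, smul_eq_mul,
    smul_eq_mul, mul_comm a⁻¹]
  exact mul_lt_mul_of_pos_left (hA.card_mul_inv_lt_trace_inv htr hne) hσ

end Matrix

section Autocorrelation

variable {N : ℕ} [NeZero N]

def circAutocorr (u : Fin N → ℝ) (s : Fin N) : ℝ := ∑ k, u k * u (k - s)

theorem sum_mul_sub_eq_circAutocorr (u : Fin N → ℝ) (a b : Fin N) :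
    ∑ k, u (k - a) * u (k - b) = circAutocorr u (b - a) := by
  rw [← Equiv.sum_comp (Equiv.addRight a)]
  refine sum_congr rfl fun k _ => ?_
  simp only [Equiv.coe_addRight, add_sub_cancel_right]
  congr 2
  abel

theorem circAutocorr_sub_comm (u : Fin N → ℝ) (a b : Fin N) :
    circAutocorr u (a - b) = circAutocorr u (b - a) := by
  rw [← sum_mul_sub_eq_circAutocorr, ← sum_mul_sub_eq_circAutocorr]
  exact sum_congr rfl fun k _ => mul_comm _ _

theorem circAutocorr_zero (u : Fin N → ℝ) : circAutocorr u 0 = u ⬝ᵥ u := by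
  simp [circAutocorr, dotProduct]

theorem circAutocorr_single_zero (x : ℝ) :
    circAutocorr (Pi.single 0 x : Fin N → ℝ) = Pi.single 0 (x * x) := by
  ext s
  simp [circAutocorr, Pi.single_apply, sub_eq_zero, eq_comm]

variable {n : ℕ}

/-- The map `f` of the paper, whose image of the sphere `uᵀu = ℰ` is `ℱ`. -/
def truncAutocorr (hnN : n ≤ N) (u : Fin N → ℝ) : Fin n → ℝ :=
  fun j => circAutocorr u (Fin.castLE hnN j)

theorem truncAutocorr_zero [NeZero n] (hnN : n ≤ N) (u : Fin N → ℝ) :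
    truncAutocorr hnN u 0 = u ⬝ᵥ u := by
  rw [truncAutocorr, ← circAutocorr_zero]
  congr

theorem truncAutocorr_single_zero [NeZero n] (hnN : n ≤ N) (x : ℝ) :
    truncAutocorr hnN (Pi.single 0 x) = Pi.single 0 (x * x) := by
  ext j
  rw [truncAutocorr, circAutocorr_single_zero, Pi.single_apply, Pi.single_apply]
  exact if_congr ((Fin.castLE_injective hnN).eq_iff' (Fin.ext (by simp))) rfl rfl

end Autocorrelation

section Toeplitz

variable {n : ℕ}

def lagMatrix (i : Fin n) : Matrix (Fin n) (Fin n) ℝ :=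
  of fun j l => if |((j : ℕ) : ℤ) - ((l : ℕ) : ℤ)| = ((i : ℕ) : ℤ) then 1 else 0

def symmToeplitz (r : Fin n → ℝ) : Matrix (Fin n) (Fin n) ℝ :=
  of fun j l => r ⟨(((j : ℕ) : ℤ) - ((l : ℕ) : ℤ)).natAbs, by omega⟩

theorem sum_smul_lagMatrix (r : Fin n → ℝ) : ∑ i, r i • lagMatrix i = symmToeplitz r := by
  ext j l
  have hlag : ∀ i : Fin n, |((j : ℕ) : ℤ) - ((l : ℕ) : ℤ)| = ((i : ℕ) : ℤ) ↔
      i = ⟨(((j : ℕ) : ℤ) - ((l : ℕ) : ℤ)).natAbs, by omega⟩ := by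
    intro i
    rw [Fin.ext_iff, Int.abs_eq_natAbs]
    simp only
    omega
  simp [Matrix.sum_apply, lagMatrix, symmToeplitz, hlag]

theorem symmToeplitz_apply_self [NeZero n] (r : Fin n → ℝ) (j : Fin n) :
    symmToeplitz r j j = r 0 := by
  simp [symmToeplitz]

theorem symmToeplitz_zero_apply [NeZero n] (r : Fin n → ℝ) (l : Fin n) :
    symmToeplitz r 0 l = r l := by
  simp [symmToeplitz]

theorem symmToeplitz_injective [NeZero n] : Function.Injective (symmToeplitz (n := n)) :=
  fun r r' h => funext fun l => by
    rw [← symmToeplitz_zero_apply r, h, symmToeplitz_zero_apply]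

theorem trace_symmToeplitz [NeZero n] (r : Fin n → ℝ) : (symmToeplitz r).trace = n * r 0 := by
  simp [trace, symmToeplitz_apply_self]

theorem symmToeplitz_single_zero [NeZero n] (e : ℝ) :
    symmToeplitz (Pi.single 0 e) = e • (1 : Matrix (Fin n) (Fin n) ℝ) := by
  ext j l
  by_cases h : j = l
  · subst h; simp [symmToeplitz_apply_self]
  · have : ((j : ℕ) : ℤ) - ((l : ℕ) : ℤ) ≠ 0 := fun h' => h (Fin.ext (by omega))
    simp [symmToeplitz, h, Pi.single_apply, Fin.ext_iff, this]

theorem posSemidef_symmToeplitz_truncAutocorr {N : ℕ} [NeZero N] (hnN : n ≤ N)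
    (u : Fin N → ℝ) : (symmToeplitz (truncAutocorr hnN u)).PosSemidef := by
  set V : Matrix (Fin n) (Fin N) ℝ := of fun j k => u (k - Fin.castLE hnN j)
  suffices symmToeplitz (truncAutocorr hnN u) = V * Vᴴ by
    rw [this]; exact posSemidef_self_mul_conjTranspose V
  ext j l
  simp only [symmToeplitz, truncAutocorr, V, mul_apply, of_apply, conjTranspose_apply,
    star_trivial, sum_mul_sub_eq_circAutocorr]
  rcases le_total (j : ℕ) l with hjl | hlj
  · congr 1
    ext
    rw [Fin.sub_val_of_le (by simpa using hjl)]
    simp only [Fin.val_castLE]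
    omega
  · rw [← circAutocorr_sub_comm]
    congr 1
    ext
    rw [Fin.sub_val_of_le (by simpa using hlj)]
    simp only [Fin.val_castLE]
    omega

end Toeplitz

/-- For the ridge kernel `P = cIₙ`, the vector `r† = (ℰ, 0, ..., 0)` is the unique
minimizer over the feasible set `ℱ` (the image of the sphere `{uᵀu = ℰ}` under the
quadratic map `f`) of both `r ↦ log det(σ² Q(r)⁻¹)` and `r ↦ Tr(σ² Q(r)⁻¹)`, where
`Q(r) = r_0 I + ∑_{i=1}^{n-1} r_i Q_i + σ² P⁻¹`. -/
theorem stmt16 (N n : ℕ) (hn : 0 < n) (hnN : n ≤ N)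
    (c σ2 E : ℝ) (hc : 0 < c) (hσ : 0 < σ2) (hE : 0 < E)
    (P : Matrix (Fin n) (Fin n) ℝ) (hP : P = c • (1 : Matrix (Fin n) (Fin n) ℝ))
    (Qi : Fin n → Matrix (Fin n) (Fin n) ℝ)
    (hQi : ∀ i j l : Fin n,
      Qi i j l = if |((j : ℕ) : ℤ) - ((l : ℕ) : ℤ)| = ((i : ℕ) : ℤ) then 1 else 0)
    (Q : (Fin n → ℝ) → Matrix (Fin n) (Fin n) ℝ)
    (hQ : ∀ r : Fin n → ℝ, Q r = ∑ i : Fin n, r i • Qi i + σ2 • P⁻¹)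
    (F : Set (Fin n → ℝ))
    (hF : F = {r : Fin n → ℝ | ∃ u : Fin N → ℝ, u ⬝ᵥ u = E ∧
      ∀ j : Fin n, r j = ∑ k : Fin N, u k * u (k - Fin.castLE hnN j)})
    (rdag : Fin n → ℝ) (hrdag : ∀ i : Fin n, rdag i = if (i : ℕ) = 0 then E else 0) :
    rdag ∈ F ∧
    (∀ r ∈ F, r ≠ rdag →
      Real.log ((σ2 • (Q rdag)⁻¹).det) < Real.log ((σ2 • (Q r)⁻¹).det)) ∧
    (∀ r ∈ F, r ≠ rdag →
      (σ2 • (Q rdag)⁻¹).trace < (σ2 • (Q r)⁻¹).trace) := by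
  have : NeZero n := ⟨hn.ne'⟩
  have : NeZero N := ⟨by omega⟩
  have hF' : F = truncAutocorr hnN '' {u | u ⬝ᵥ u = E} := by
    rw [hF]; ext r; simp [funext_iff, truncAutocorr, circAutocorr, eq_comm]
  have hQr : ∀ r, Q r = symmToeplitz r + (σ2 / c) • 1 := fun r => by
    rw [hQ, (funext fun i => Matrix.ext (hQi i) : Qi = lagMatrix), sum_smul_lagMatrix, hP,
      inv_smul_one, smul_smul, div_eq_mul_inv]
  have hrdag' : rdag = Pi.single 0 E := funext fun i => by
    simp only [hrdag, Pi.single_apply, Fin.val_eq_zero_iff]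
  have hQdag : Q rdag = (E + σ2 / c) • 1 := by
    rw [hQr, hrdag', symmToeplitz_single_zero, ← add_smul]
  have hfeas : ∀ r ∈ F, (Q r).PosDef ∧ (Q r).trace = Fintype.card (Fin n) * (E + σ2 / c) := by
    rw [hF']
    rintro _ ⟨u, hu, rfl⟩
    refine ⟨hQr _ ▸ PosDef.posSemidef_add (posSemidef_symmToeplitz_truncAutocorr hnN u)
      (PosDef.one.smul (by positivity)), ?_⟩
    rw [hQr, trace_add, trace_symmToeplitz, truncAutocorr_zero, hu, trace_smul, trace_one,
      Fintype.card_fin, smul_eq_mul]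
    ring
  have hQne : ∀ r, r ≠ rdag → Q r ≠ (E + σ2 / c) • 1 := fun r hr hQa =>
    hr (symmToeplitz_injective (add_right_cancel (by rw [← hQr, ← hQr, hQa, hQdag])))
  refine ⟨?_, fun r hr hne => ?_, fun r hr hne => ?_⟩
  · rw [hF', hrdag']
    refine ⟨Pi.single 0 (Real.sqrt E), ?_, ?_⟩
    · simp [Real.mul_self_sqrt hE.le]
    · rw [truncAutocorr_single_zero, Real.mul_self_sqrt hE.le]
  · rw [hQdag]
    exact (hfeas r hr).1.log_det_smul_inv_lt hσ (hfeas r hr).2 (hQne r hne)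
  · rw [hQdag]
    exact (hfeas r hr).1.trace_smul_inv_lt hσ (hfeas r hr).2 (hQne r hne)
end

section
/- Let P = diag(λ_1,...,λ_n) with all λ_i > 0, σ² > 0, and Q(r) = r_0 I_n + Σ_{i=1}^{n-1} r_i Q_i + σ² P^{-1}. Then the gradient of r' ↦ log det(σ² Q((ℰ, r'))^{-1}) at r' = 0 is zero; consequently r† = (ℰ, 0,...,0) is a stationary point, and being the convex problem's unique stationary point, r† minimizes log det(σ² Q(r)^{-1}) over the convex feasible set ℱ containing r†. -/
/-!
At `r† = (ℰ, 0, …, 0)` the matrix `Q(r†) = ℰ I + σ² P⁻¹` is diagonal, so by Jacobi's formula the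
derivative of `t ↦ det (Q(r†) + t Q_i)` at `0` is `det Q(r†) · tr (Q(r†)⁻¹ Q_i) = 0`, because `Q_i`
has zero diagonal for `i ≠ 0`.

Every `r ∈ ℱ` is the cyclic autocorrelation of some `u` with `‖u‖² = ℰ`, hence `∑ r_i Q_i = VᵀV`
for the matrix `V` of cyclic shifts of `u`. So `Q(r)` is positive definite with the same diagonal
`ℰ + σ²/λ_j` as `Q(r†)`, and Hadamard's inequality `det Q(r) ≤ ∏_j Q(r)_jj = det Q(r†)` gives the
minimality of `r†`.
-/

open Matrix

theorem Real.prod_le_one_of_sum_eq_card {ι : Type*} [Fintype ι] {μ : ι → ℝ}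
    (hμ : ∀ i, 0 ≤ μ i) (hsum : ∑ i, μ i = Fintype.card ι) : ∏ i, μ i ≤ 1 :=
  calc ∏ i, μ i ≤ ∏ i, Real.exp (μ i - 1) :=
        Finset.prod_le_prod (fun i _ => hμ i) fun i _ => by
          linarith [Real.add_one_le_exp (μ i - 1)]
    _ = 1 := by rw [← Real.exp_sum, Finset.sum_sub_distrib, hsum]; simp

namespace Matrix

variable {ι : Type*} [Fintype ι] [DecidableEq ι]

theorem PosSemidef.det_le_one_of_trace_eq_card {A : Matrix ι ι ℝ} (hA : A.PosSemidef)
    (htr : A.trace = Fintype.card ι) : A.det ≤ 1 := by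
  rw [hA.1.det_eq_prod_eigenvalues]
  refine Real.prod_le_one_of_sum_eq_card hA.eigenvalues_nonneg ?_
  simpa [hA.1.trace_eq_sum_eigenvalues] using htr

theorem PosDef.det_le_prod_diag {A : Matrix ι ι ℝ} (hA : A.PosDef) : A.det ≤ ∏ i, A i i := by
  set s : ι → ℝ := fun i => (√(A i i))⁻¹
  have hs : ∀ i, s i * A i i * s i = 1 := fun i => by
    have hpos : 0 < A i i := hA.diag_pos
    calc s i * A i i * s i = (√(A i i) * √(A i i))⁻¹ * A i i := by simp only [s, mul_inv]; ring
      _ = 1 := by rw [Real.mul_self_sqrt hpos.le, inv_mul_cancel₀ hpos.ne']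
  have hB : (diagonal s * A * diagonal s).PosSemidef := by
    simpa using hA.posSemidef.conjTranspose_mul_mul_same (diagonal s)
  have htr : (diagonal s * A * diagonal s).trace = Fintype.card ι := by
    simp [trace, diagonal_mul, mul_diagonal, hs]
  have hdet : (diagonal s * A * diagonal s).det * ∏ i, A i i = A.det := by
    rw [det_mul, det_mul, det_diagonal, mul_comm _ A.det, mul_assoc, mul_assoc,
      ← Finset.prod_mul_distrib, ← Finset.prod_mul_distrib,
      Finset.prod_eq_one fun x _ => by rw [← hs x]; ring, mul_one]
  calc A.det = (diagonal s * A * diagonal s).det * ∏ i, A i i := hdet.symm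
    _ ≤ 1 * ∏ i, A i i := mul_le_mul_of_nonneg_right (hB.det_le_one_of_trace_eq_card htr)
      (Finset.prod_nonneg fun i _ => hA.diag_pos.le)
    _ = ∏ i, A i i := one_mul _

theorem hasDerivAt_det_one_add_smul (M : Matrix ι ι ℝ) :
    HasDerivAt (fun t : ℝ => (1 + t • M).det) M.trace 0 := by
  have h := (det (1 + (Polynomial.X : Polynomial ℝ) • M.map Polynomial.C)).hasDerivAt 0
  rw [derivative_det_one_add_X_smul] at h
  refine h.congr_of_eventuallyEq (Filter.Eventually.of_forall fun t => ?_)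
  show (1 + t • M).det = Polynomial.eval t _
  rw [← Polynomial.coe_evalRingHom, RingHom.map_det]
  congr 1
  ext i j
  by_cases hij : i = j <;> simp [hij, mul_comm t]

theorem hasDerivAt_det_add_smul {A : Matrix ι ι ℝ} (hA : IsUnit A.det) (B : Matrix ι ι ℝ) :
    HasDerivAt (fun t : ℝ => (A + t • B).det) (A.det * (A⁻¹ * B).trace) 0 := by
  have h : ∀ t : ℝ, A + t • B = A * (1 + t • (A⁻¹ * B)) := fun t => by
    rw [mul_add, mul_one, mul_smul_comm, mul_nonsing_inv_cancel_left _ _ hA]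
  simp_rw [h, det_mul]
  exact (hasDerivAt_det_one_add_smul _).const_mul _

theorem hasDerivAt_det_diagonal_add_smul {d : ι → ℝ} (hd : ∀ i, d i ≠ 0) {B : Matrix ι ι ℝ}
    (hB : ∀ i, B i i = 0) : HasDerivAt (fun t : ℝ => (diagonal d + t • B).det) 0 0 := by
  have htr : ((diagonal d)⁻¹ * B).trace = 0 := by
    simp [inv_diagonal, trace, diagonal_mul, hB]
  have hunit : IsUnit (diagonal d).det := by
    rw [det_diagonal]; exact (Finset.prod_ne_zero_iff.2 fun i _ => hd i).isUnit
  simpa only [htr, mul_zero] using hasDerivAt_det_add_smul hunit B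

theorem smul_inv_diagonal (c : ℝ) {d : ι → ℝ} (hd : ∀ i, d i ≠ 0) :
    c • (diagonal d)⁻¹ = diagonal fun i => c * (d i)⁻¹ := by
  rw [inv_eq_right_inv (B := diagonal fun i => (d i)⁻¹)
    (by simp [fun i => mul_inv_cancel₀ (hd i)]), ← diagonal_smul]
  rfl

theorem det_smul_inv (c : ℝ) (A : Matrix ι ι ℝ) :
    (c • A⁻¹).det = c ^ Fintype.card ι * A.det⁻¹ := by
  rw [det_smul, det_nonsing_inv, Ring.inverse_eq_inv']

theorem log_det_smul_inv_le_of_det_le {c : ℝ} (hc : 0 < c) {A B : Matrix ι ι ℝ}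
    (hA : 0 < A.det) (hAB : A.det ≤ B.det) :
    Real.log (c • B⁻¹).det ≤ Real.log (c • A⁻¹).det := by
  rw [det_smul_inv, det_smul_inv]
  have hB : 0 < B.det := hA.trans_le hAB
  exact Real.log_le_log (by positivity) (by gcongr)

theorem hasDerivAt_log_det_smul_inv {c : ℝ} (hc : c ≠ 0) {A : ℝ → Matrix ι ι ℝ} {x : ℝ}
    (hA : HasDerivAt (fun t => (A t).det) 0 x) (hx : (A x).det ≠ 0) :
    HasDerivAt (fun t => Real.log (c • (A t)⁻¹).det) 0 x := by
  simp_rw [det_smul_inv]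
  simpa using ((hA.inv hx).const_mul (c ^ Fintype.card ι)).log
    (mul_ne_zero (pow_ne_zero _ hc) (inv_ne_zero hx))

end Matrix

theorem Fintype.sum_update_smul {ι M : Type*} [Fintype ι] [DecidableEq ι] [AddCommGroup M]
    [Module ℝ M] (r : ι → ℝ) (v : ι → M) (i : ι) (t : ℝ) :
    ∑ j, Function.update r i t j • v j = ∑ j, r j • v j + (t - r i) • v i := by
  rw [Fintype.sum_eq_add_sum_compl i, Fintype.sum_eq_add_sum_compl i (fun j => r j • v j)]
  simp only [Function.update_self]
  rw [Finset.sum_congr rfl fun j hj => by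
    rw [Function.update_of_ne (Finset.mem_compl.1 hj ∘ Finset.mem_singleton.2)]]
  rw [sub_smul]; abel

section Autocorrelation

variable {n N : ℕ}

def bandMatrix (n : ℕ) (i : Fin n) : Matrix (Fin n) (Fin n) ℝ :=
  fun j l => if |((j : ℕ) : ℤ) - ((l : ℕ) : ℤ)| = ((i : ℕ) : ℤ) then 1 else 0

theorem bandMatrix_apply_self {i : Fin n} (hi : (i : ℕ) ≠ 0) (j : Fin n) :
    bandMatrix n i j j = 0 := by
  simp [bandMatrix, eq_comm, hi]

theorem sum_smul_bandMatrix_apply (r : Fin n → ℝ) {i j l : Fin n}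
    (h : ((i : ℕ) : ℤ) = |((j : ℕ) : ℤ) - ((l : ℕ) : ℤ)|) :
    (∑ k, r k • bandMatrix n k) j l = r i := by
  have hiff : ∀ k : Fin n, |((j : ℕ) : ℤ) - ((l : ℕ) : ℤ)| = ((k : ℕ) : ℤ) ↔ i = k := by
    intro k; rw [← h]; simp [Fin.ext_iff]
  simp [Matrix.sum_apply, bandMatrix, hiff]

theorem sum_smul_bandMatrix_apply_self [NeZero n] (r : Fin n → ℝ) (j : Fin n) :
    (∑ k, r k • bandMatrix n k) j j = r 0 :=
  sum_smul_bandMatrix_apply r (by simp)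

theorem bandMatrix_zero [NeZero n] : bandMatrix n 0 = 1 := by
  ext j l
  simp [bandMatrix, Matrix.one_apply, sub_eq_zero, Fin.ext_iff]

theorem sum_ite_smul_bandMatrix [NeZero n] (c : ℝ) :
    ∑ k : Fin n, (if (k : ℕ) = 0 then c else 0) • bandMatrix n k = diagonal fun _ => c := by
  simp [Fin.val_eq_zero_iff, ite_smul, bandMatrix_zero, ← diagonal_one, ← diagonal_smul]

def autocorr (hnN : n ≤ N) (u : Fin N → ℝ) (j : Fin n) : ℝ :=
  ∑ k, u k * u (k - Fin.castLE hnN j)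

-- Indices of `Fin N` wrap around, matching the cyclic shift `k - j` in the definition of `ℱ`.
def shiftMatrix (hnN : n ≤ N) (u : Fin N → ℝ) : Matrix (Fin N) (Fin n) ℝ :=
  Matrix.of fun k a => u (k + Fin.castLE hnN a)

theorem autocorr_zero [NeZero n] [NeZero N] (hnN : n ≤ N) (u : Fin N → ℝ) :
    autocorr hnN u 0 = u ⬝ᵥ u := by
  have h0 : Fin.castLE hnN (0 : Fin n) = 0 := Fin.ext (by simp)
  simp [autocorr, dotProduct, h0]

theorem autocorr_single [NeZero N] (hnN : n ≤ N) (c : ℝ) (j : Fin n) :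
    autocorr hnN (Pi.single 0 c) j = if (j : ℕ) = 0 then c * c else 0 := by
  rw [autocorr, Fintype.sum_eq_single 0 fun k hk => by simp [Pi.single_apply, hk]]
  simp [Pi.single_apply, Fin.ext_iff]

theorem autocorr_sub_eq_sum_mul [NeZero N] (hnN : n ≤ N) (u : Fin N → ℝ) {a b : Fin n}
    (hba : (b : ℕ) ≤ a) :
    autocorr hnN u ⟨a - b, by omega⟩ =
      ∑ k, u (k + Fin.castLE hnN a) * u (k + Fin.castLE hnN b) := by
  have hshift : Fin.castLE hnN a - Fin.castLE hnN ⟨a - b, by omega⟩ = Fin.castLE hnN b := by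
    rw [sub_eq_iff_eq_add]
    ext
    simp only [Fin.val_add, Fin.val_castLE, Nat.add_sub_cancel' hba]
    exact (Nat.mod_eq_of_lt (a.isLt.trans_le hnN)).symm
  refine (Fintype.sum_equiv (Equiv.addRight (Fin.castLE hnN a)) _ _ fun k => ?_).symm
  rw [Equiv.coe_addRight, add_sub_assoc, hshift]

theorem sum_smul_bandMatrix_autocorr [NeZero N] (hnN : n ≤ N) (u : Fin N → ℝ) :
    ∑ i, autocorr hnN u i • bandMatrix n i = (shiftMatrix hnN u)ᵀ * shiftMatrix hnN u := by
  ext a b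
  simp only [Matrix.mul_apply, Matrix.transpose_apply, shiftMatrix, Matrix.of_apply]
  rcases le_total (b : ℕ) a with hba | hab
  · rw [sum_smul_bandMatrix_apply _ (i := ⟨a - b, by omega⟩)
      (by push_cast [hba]; exact (abs_of_nonneg (by omega)).symm),
      autocorr_sub_eq_sum_mul hnN u hba]
  · rw [sum_smul_bandMatrix_apply _ (i := ⟨b - a, by omega⟩)
      (by push_cast [hab]; rw [abs_sub_comm]; exact (abs_of_nonneg (by omega)).symm),
      autocorr_sub_eq_sum_mul hnN u hab]
    simp only [mul_comm]

theorem posDef_sum_smul_bandMatrix_autocorr_add_diagonal [NeZero N] (hnN : n ≤ N)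
    (u : Fin N → ℝ) {δ : Fin n → ℝ} (hδ : ∀ a, 0 < δ a) :
    (∑ i, autocorr hnN u i • bandMatrix n i + diagonal δ).PosDef := by
  rw [sum_smul_bandMatrix_autocorr]
  exact PosDef.posSemidef_add (posSemidef_conjTranspose_mul_self _) (posDef_diagonal_iff.2 hδ)

theorem det_sum_smul_bandMatrix_autocorr_add_diagonal_le [NeZero n] [NeZero N] (hnN : n ≤ N)
    (u : Fin N → ℝ) {δ : Fin n → ℝ} (hδ : ∀ a, 0 < δ a) :
    (∑ i, autocorr hnN u i • bandMatrix n i + diagonal δ).det ≤ ∏ a, (u ⬝ᵥ u + δ a) := by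
  convert (posDef_sum_smul_bandMatrix_autocorr_add_diagonal hnN u hδ).det_le_prod_diag using 2
  simp [sum_smul_bandMatrix_apply_self, autocorr_zero]

end Autocorrelation

/-- For a diagonal kernel `P = diag(λ_1,...,λ_n)` with all `λ_i > 0`, the gradient of
`r ↦ log det(σ² Q(r)⁻¹)` vanishes at `r† = (ℰ, 0, ..., 0)` (each partial derivative
in the directions `r_i`, `i ≠ 0`, is zero), and `r†` minimizes
`log det(σ² Q(r)⁻¹)` over the feasible set `ℱ`, which contains `r†`. -/
theorem stmt17 (N n : ℕ) (hn : 0 < n) (hnN : n ≤ N)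
    (lam : Fin n → ℝ) (hlam : ∀ i, 0 < lam i)
    (σ2 E : ℝ) (hσ : 0 < σ2) (hE : 0 < E)
    (P : Matrix (Fin n) (Fin n) ℝ) (hP : P = Matrix.diagonal lam)
    (Qi : Fin n → Matrix (Fin n) (Fin n) ℝ)
    (hQi : ∀ i j l : Fin n,
      Qi i j l = if |((j : ℕ) : ℤ) - ((l : ℕ) : ℤ)| = ((i : ℕ) : ℤ) then 1 else 0)
    (Q : (Fin n → ℝ) → Matrix (Fin n) (Fin n) ℝ)
    (hQ : ∀ r : Fin n → ℝ, Q r = ∑ i : Fin n, r i • Qi i + σ2 • P⁻¹)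
    (F : Set (Fin n → ℝ))
    (hF : F = {r : Fin n → ℝ | ∃ u : Fin N → ℝ, u ⬝ᵥ u = E ∧
      ∀ j : Fin n, r j = ∑ k : Fin N, u k * u (k - Fin.castLE hnN j)})
    (rdag : Fin n → ℝ) (hrdag : ∀ i : Fin n, rdag i = if (i : ℕ) = 0 then E else 0) :
    rdag ∈ F ∧
    (∀ i : Fin n, (i : ℕ) ≠ 0 →
      HasDerivAt
        (fun t : ℝ => Real.log ((σ2 • (Q (Function.update rdag i t))⁻¹).det))
        0 (0 : ℝ)) ∧
    (∀ r ∈ F,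
      Real.log ((σ2 • (Q rdag)⁻¹).det) ≤ Real.log ((σ2 • (Q r)⁻¹).det)) := by
  have : NeZero n := ⟨hn.ne'⟩
  have : NeZero N := ⟨by omega⟩
  obtain rfl : Qi = bandMatrix n := funext fun i => Matrix.ext (hQi i)
  obtain rfl : rdag = fun i : Fin n => if (i : ℕ) = 0 then E else 0 := funext hrdag
  set δ : Fin n → ℝ := fun a => σ2 * (lam a)⁻¹
  have hδ : ∀ a, 0 < δ a := fun a => by have := hlam a; positivity
  have hQ' : ∀ r, Q r = ∑ i, r i • bandMatrix n i + diagonal δ := fun r => by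
    rw [hQ, hP, smul_inv_diagonal _ fun a => (hlam a).ne']
  have hQrdag : Q (fun i : Fin n => if (i : ℕ) = 0 then E else 0) = diagonal fun a => E + δ a := by
    rw [hQ', sum_ite_smul_bandMatrix, diagonal_add]
  have hF' : F = {r | ∃ u : Fin N → ℝ, u ⬝ᵥ u = E ∧ r = autocorr hnN u} := by
    simp only [hF, funext_iff, autocorr]
  refine ⟨?_, fun i hi => ?_, fun r hr => ?_⟩
  · rw [hF']
    refine ⟨Pi.single 0 √E, by simp [hE.le], funext fun j => ?_⟩
    rw [autocorr_single, Real.mul_self_sqrt hE.le]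
  · have hpath : ∀ t, Q (Function.update _ i t) = diagonal _ + t • bandMatrix n i := fun t => by
      rw [hQ', Fintype.sum_update_smul, add_right_comm, ← hQ', hQrdag, if_neg hi, sub_zero]
    have hd : ∀ a, E + δ a ≠ 0 := fun a => (add_pos hE (hδ a)).ne'
    simp_rw [hpath]
    refine hasDerivAt_log_det_smul_inv hσ.ne'
      (hasDerivAt_det_diagonal_add_smul hd (bandMatrix_apply_self hi)) ?_
    simpa [det_diagonal, Finset.prod_ne_zero_iff] using hd
  · rw [hF'] at hr
    obtain ⟨u, rfl, rfl⟩ := hr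
    rw [hQrdag, hQ']
    refine log_det_smul_inv_le_of_det_le hσ
      (posDef_sum_smul_bandMatrix_autocorr_add_diagonal hnN u hδ).det_pos ?_
    rw [det_diagonal]
    exact det_sum_smul_bandMatrix_autocorr_add_diagonal_le hnN u hδ
end
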